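/- Let 0 < p⃗, θ ≤ ∞ and let w be a non-negative measurable function on (0,∞). If ‖w(r)·r^{1/p_1+⋯+1/p_n}‖_{L^θ(0,t)} = ∞ for every t > 0, then every f ∈ LM_{p⃗θ,w}(ℝ^n) that is continuous at the origin satisfies f(0) = 0. -/

import Mathlib

open MeasureTheory ENNReal NNReal Set Filter

noncomputable section

namespace LMM

/-- `L^p` "norm" (with the usual `essSup` convention for `p = ∞`)
of an `ℝ≥0∞`-valued function on `ℝ` with respect to a measure `μ`. -/
def lpNormE (p : ℝ≥0∞) (g : ℝ → ℝ≥0∞) (μ : Measure ℝ) : ℝ≥0∞ :=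
  if p = ∞ then essSup g μ else (∫⁻ t, g t ^ p.toReal ∂μ) ^ (1 / p.toReal)

/-- Iterated mixed Lebesgue norm of an `ℝ≥0∞`-valued function on `ℝ^n`:
the innermost integration is in the variable `x 1` with exponent `p 1`,
the outermost in `x n` with exponent `p n`. -/
def mixedNorm : (n : ℕ) → (Fin n → ℝ≥0∞) → ((Fin n → ℝ) → ℝ≥0∞) → ℝ≥0∞
  | 0, _, g => g finZeroElim
  | (n + 1), p, g =>
      lpNormE (p (Fin.last n))
        (fun t => mixedNorm n (fun i => p i.castSucc) (fun x => g (Fin.snoc x t)))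
        volume

/-- Mixed Lebesgue norm of `g` restricted to a set `S`. -/
def mixedNormOn (n : ℕ) (p : Fin n → ℝ≥0∞) (g : (Fin n → ℝ) → ℝ≥0∞)
    (S : Set (Fin n → ℝ)) : ℝ≥0∞ :=
  mixedNorm n p (S.indicator g)

/-- The (closed) cube centered at `c` with side length `2 * r`. -/
def cubeAt {n : ℕ} (c : Fin n → ℝ) (r : ℝ) : Set (Fin n → ℝ) := {x | ∀ i, |x i - c i| ≤ r}

/-- The cube `Q(0, r)` centered at the origin with side length `2 * r`. -/
def cube0 (n : ℕ) (r : ℝ) : Set (Fin n → ℝ) := cubeAt 0 r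

/-- Euclidean norm on `Fin n → ℝ`. -/
def euclNorm {n : ℕ} (x : Fin n → ℝ) : ℝ := Real.sqrt (∑ i, x i ^ 2)

/-- The closed Euclidean ball of radius `r` centered at the origin. -/
def closedBall0 (n : ℕ) (r : ℝ) : Set (Fin n → ℝ) := {x | euclNorm x ≤ r}

/-- The local mixed Morrey-type quasi-norm `‖·‖_{LM_{p θ, w}}` of an
`ℝ≥0∞`-valued function. -/
def LMnormE (n : ℕ) (p : Fin n → ℝ≥0∞) (θ : ℝ≥0∞) (w : ℝ → ℝ)
    (g : (Fin n → ℝ) → ℝ≥0∞) : ℝ≥0∞ :=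
  lpNormE θ (fun r => ENNReal.ofReal (w r) * mixedNormOn n p g (cube0 n r))
    (volume.restrict (Ioi (0 : ℝ)))

/-- The local mixed Morrey-type quasi-norm of a real-valued function. -/
def LMnorm (n : ℕ) (p : Fin n → ℝ≥0∞) (θ : ℝ≥0∞) (w : ℝ → ℝ)
    (f : (Fin n → ℝ) → ℝ) : ℝ≥0∞ :=
  LMnormE n p θ w (fun x => (‖f x‖₊ : ℝ≥0∞))

/-- `1/p₁ + ⋯ + 1/pₙ`. -/
def sumInv {n : ℕ} (p : Fin n → ℝ≥0∞) : ℝ := ∑ i, ((p i)⁻¹).toReal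

/-- Hardy–Littlewood maximal operator (over cubes) of an `ℝ≥0∞`-valued function. -/
def maximalE {n : ℕ} (g : (Fin n → ℝ) → ℝ≥0∞) (x : Fin n → ℝ) : ℝ≥0∞ :=
  ⨆ (c : Fin n → ℝ) (r : ℝ) (_ : 0 < r) (_ : x ∈ cubeAt c r),
    (volume (cubeAt c r))⁻¹ * ∫⁻ y in cubeAt c r, g y

/-- Hardy–Littlewood maximal operator of a real-valued function. -/
def maximal {n : ℕ} (f : (Fin n → ℝ) → ℝ) : (Fin n → ℝ) → ℝ≥0∞ :=
  maximalE (fun y => (‖f y‖₊ : ℝ≥0∞))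

/-- Weighted `L^θ` norm `‖v · g‖_{L^θ(0,∞)}` of an `ℝ≥0∞`-valued function. -/
def wLpE (θ : ℝ≥0∞) (v : ℝ → ℝ) (g : ℝ → ℝ≥0∞) : ℝ≥0∞ :=
  lpNormE θ (fun r => ENNReal.ofReal (v r) * g r) (volume.restrict (Ioi (0 : ℝ)))

/-- The dual Hardy operator `H* g (r) = ∫_r^∞ g`. -/
def dualHardyE (g : ℝ → ℝ≥0∞) (r : ℝ) : ℝ≥0∞ := ∫⁻ t in Ioi r, g t

/-- The Hardy operator `H g (r) = ∫_0^r g`. -/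
def hardyE (g : ℝ → ℝ≥0∞) (r : ℝ) : ℝ≥0∞ := ∫⁻ t in Ioo 0 r, g t

/-- The weight `v̂₁(r) = r^{-(1/p₁+⋯+1/pₙ)-1} w(r)`. -/
def vhat1 {n : ℕ} (p : Fin n → ℝ≥0∞) (w : ℝ → ℝ) (r : ℝ) : ℝ :=
  r ^ (-(sumInv p) - 1) * w r

/-- The weight `v̂₂(r) = r^{-(1/p₁+⋯+1/pₙ)} w(r)`. -/
def vhat2 {n : ℕ} (p : Fin n → ℝ≥0∞) (w : ℝ → ℝ) (r : ℝ) : ℝ :=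
  r ^ (-(sumInv p)) * w r

/-- Boundedness of the dual Hardy operator `H*` from `L_{θ,v₁}(0,∞)` to `L_{θ,v₂}(0,∞)`. -/
def DualHardyBounded (θ : ℝ≥0∞) (v1 v2 : ℝ → ℝ) : Prop :=
  ∃ C : ℝ≥0, ∀ g : ℝ → ℝ≥0∞, Measurable g → wLpE θ v2 (dualHardyE g) ≤ C * wLpE θ v1 g

/-- Boundedness of the Hardy operator `H` from `L_{θ,v₁}(0,∞)` to `L_{θ,v₂}(0,∞)`. -/
def HardyBounded (θ : ℝ≥0∞) (v1 v2 : ℝ → ℝ) : Prop :=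
  ∃ C : ℝ≥0, ∀ g : ℝ → ℝ≥0∞, Measurable g → wLpE θ v2 (hardyE g) ≤ C * wLpE θ v1 g

/-- The class `Ω_θ`. -/
def OmegaTheta (θ : ℝ≥0∞) (w : ℝ → ℝ) : Prop :=
  Measurable w ∧ (∀ r, 0 ≤ w r) ∧
    ¬ (∀ᵐ r ∂(volume.restrict (Ioi (0 : ℝ))), w r = 0) ∧
    ∃ t > (0 : ℝ), lpNormE θ (fun r => ENNReal.ofReal (w r)) (volume.restrict (Ioi t)) < ∞

/-- The class `Ω_{p,θ}`. -/
def OmegaPTheta {n : ℕ} (p : Fin n → ℝ≥0∞) (θ : ℝ≥0∞) (w : ℝ → ℝ) : Prop :=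
  Measurable w ∧ (∀ r, 0 ≤ w r) ∧
    ¬ (∀ᵐ r ∂(volume.restrict (Ioi (0 : ℝ))), w r = 0) ∧
    (∃ t > (0 : ℝ), lpNormE θ (fun r => ENNReal.ofReal (w r)) (volume.restrict (Ioi t)) < ∞) ∧
    (∃ t > (0 : ℝ), lpNormE θ (fun r => ENNReal.ofReal (w r * r ^ sumInv p))
        (volume.restrict (Ioo (0 : ℝ) t)) < ∞)

/-- The doubling condition `C⁻¹ w(r) ≤ w(2r) ≤ C w(r)` for all `r > 0`. -/
def Doubling (w : ℝ → ℝ) : Prop :=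
  ∃ C : ℝ, 0 < C ∧ ∀ r > (0 : ℝ), C⁻¹ * w r ≤ w (2 * r) ∧ w (2 * r) ≤ C * w r

/-- Conjugate exponent in `ℝ≥0∞`. -/
def conjE (p : ℝ≥0∞) : ℝ≥0∞ := (1 - p⁻¹)⁻¹

/-- `A` is a `(p', w, R)`-block: supported in `Q(0,R)` with `‖A‖_{L^{p'}} ≤ w(R)`. -/
def IsBlock {n : ℕ} (p' : Fin n → ℝ≥0∞) (w : ℝ → ℝ) (R : ℝ)
    (A : (Fin n → ℝ) → ℝ) : Prop :=
  Measurable A ∧ (∀ x ∉ cube0 n R, A x = 0) ∧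
    mixedNorm n p' (fun x => (‖A x‖₊ : ℝ≥0∞)) ≤ ENNReal.ofReal (w R)

/-- `ℓ^q` norm of a `ℤ`-indexed real sequence. -/
def ellNorm (q : ℝ≥0∞) (a : ℤ → ℝ) : ℝ≥0∞ :=
  if q = ∞ then ⨆ j, (‖a j‖₊ : ℝ≥0∞)
  else (∑' j, (‖a j‖₊ : ℝ≥0∞) ^ q.toReal) ^ (1 / q.toReal)

/-- Membership in the local block space `LH_{p' θ', w}`. -/
def MemLH {n : ℕ} (p' : Fin n → ℝ≥0∞) (θ' : ℝ≥0∞) (w : ℝ → ℝ)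
    (g : (Fin n → ℝ) → ℝ) : Prop :=
  ∃ (lam : ℤ → ℝ) (A : ℤ → (Fin n → ℝ) → ℝ),
    (∀ j, IsBlock p' w ((2 : ℝ) ^ j) (A j)) ∧
    (∀ᵐ x, HasSum (fun j => lam j * A j x) (g x)) ∧ ellNorm θ' lam < ∞

/-- The local block space norm `‖g‖_{LH_{p' θ', w}}`. -/
def LHnorm {n : ℕ} (p' : Fin n → ℝ≥0∞) (θ' : ℝ≥0∞) (w : ℝ → ℝ)
    (g : (Fin n → ℝ) → ℝ) : ℝ≥0∞ :=
  ⨅ (lam : ℤ → ℝ) (A : ℤ → (Fin n → ℝ) → ℝ)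
    (_ : (∀ j, IsBlock p' w ((2 : ℝ) ^ j) (A j)) ∧
         ∀ᵐ x, HasSum (fun j => lam j * A j x) (g x)),
    ellNorm θ' lam

/-- `(∫_0^∞ (r^{-λ} A(r))^q dr/r)^{1/q}` (essential supremum when `q = ∞`). -/
def morreyScale (q : ℝ≥0∞) (lam : ℝ) (A : ℝ → ℝ≥0∞) : ℝ≥0∞ :=
  if q = ∞ then essSup (fun r => ENNReal.ofReal (r ^ (-lam)) * A r) (volume.restrict (Ioi (0 : ℝ)))
  else (∫⁻ r in Ioi (0 : ℝ),
      (ENNReal.ofReal (r ^ (-lam)) * A r) ^ q.toReal * ENNReal.ofReal r⁻¹) ^ (1 / q.toReal)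

/-- The local mixed Morrey norm `‖·‖_{LM^λ_{p,q}}` (cubes `Q(0,r)`). -/
def LMlamQ (n : ℕ) (p : Fin n → ℝ≥0∞) (q : ℝ≥0∞) (lam : ℝ)
    (g : (Fin n → ℝ) → ℝ≥0∞) : ℝ≥0∞ :=
  morreyScale q lam (fun r => mixedNormOn n p g (cube0 n r))

/-- The local mixed Morrey norm `‖·‖_{LM^λ_{p,q}}` (balls `B(0,r)`). -/
def LMlamB (n : ℕ) (p : Fin n → ℝ≥0∞) (q : ℝ≥0∞) (lam : ℝ)
    (g : (Fin n → ℝ) → ℝ≥0∞) : ℝ≥0∞ :=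
  morreyScale q lam (fun r => mixedNormOn n p g (closedBall0 n r))

/-- Condition (★) on the auxiliary exponent vector `s`. -/
def StarCond {n : ℕ} (p s : Fin n → ℝ≥0∞) (w : ℝ → ℝ) : Prop :=
  ∃ C : ℝ, ∀ r : ℝ, 0 < r →
    (∫⁻ t in Ioi r,
        ENNReal.ofReal (t ^ (sumInv s / (n : ℝ) - sumInv p / (n : ℝ) - 1) / w (r * t)))
      ≤ ENNReal.ofReal (C * (r ^ (sumInv p / (n : ℝ) - sumInv s / (n : ℝ)) / w r))

/-- `ℓ^u`-norm (`sup` for `u = ∞`) of an `ℕ`-indexed family in `ℝ≥0∞`. -/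
def vecNorm (u : ℝ≥0∞) (a : ℕ → ℝ≥0∞) : ℝ≥0∞ :=
  if u = ∞ then ⨆ j, a j else (∑' j, a j ^ u.toReal) ^ (1 / u.toReal)

/-- Operator norm of the functional `g ↦ ∫ f g` on the local block space. -/
def dualNormOf (n : ℕ) (p : Fin n → ℝ≥0∞) (θ : ℝ≥0∞) (w : ℝ → ℝ)
    (f : (Fin n → ℝ) → ℝ) : ℝ≥0∞ :=
  ⨆ (g : (Fin n → ℝ) → ℝ) (_ : MemLH (fun i => conjE (p i)) (conjE θ) w g)
    (_ : LHnorm (fun i => conjE (p i)) (conjE θ) w g ≤ 1),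
    ENNReal.ofReal |∫ x, f x * g x|

/-- `sup_{t>0} |e^{tΔ}f(x)|` for a (locally integrable) function `f`. -/
def heatSup (n : ℕ) (f : (Fin n → ℝ) → ℝ) (x : Fin n → ℝ) : ℝ≥0∞ :=
  ⨆ (t : ℝ) (_ : 0 < t),
    ENNReal.ofReal
      |∫ y, (4 * Real.pi * t) ^ (-(n : ℝ) / 2) *
          Real.exp (-(∑ i, (x i - y i) ^ 2) / (4 * t)) * f y|

/-- The Schwartz seminorm `ρ_N`. -/
def rhoN {n : ℕ} (N : ℕ) (φ : SchwartzMap (Fin n → ℝ) ℝ) : ℝ≥0∞ :=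
  ∑ k ∈ Finset.range (N + 1),
    ⨆ x : Fin n → ℝ, ENNReal.ofReal ((1 + euclNorm x) ^ N * ‖iteratedFDeriv ℝ k (⇑φ) x‖)

/-- The grand maximal operator of a (locally integrable) function. -/
def grandMaxF {n : ℕ} (N : ℕ) (f : (Fin n → ℝ) → ℝ) (x : Fin n → ℝ) : ℝ≥0∞ :=
  ⨆ (φ : SchwartzMap (Fin n → ℝ) ℝ) (_ : rhoN N φ ≤ 1) (t : ℝ) (_ : 0 < t),
    ENNReal.ofReal |∫ y, t ^ (-(n : ℝ)) * φ (fun i => (x i - y i) / t) * f y|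

/-- The `n`-dimensional Hardy operator `Hf(x) = |x|^{-n} ∫_{|y|<|x|} f(y) dy`. -/
def hardyOp {n : ℕ} (f : (Fin n → ℝ) → ℝ) (x : Fin n → ℝ) : ℝ :=
  (euclNorm x) ^ (-(n : ℝ)) * ∫ y in {y : Fin n → ℝ | euclNorm y < euclNorm x}, f y

/-! If `f 0 ≠ 0`, continuity gives `|f| ≥ c > 0` on a cube `Q(0, δ)`. For `r < δ` the mixed norm
of `f` on `Q(0, r)` is then at least `c (2r)^{Σ 1/pᵢ}`, so the Morrey norm of `f` dominates
`c ‖w(r) r^{Σ 1/pᵢ}‖_{L^θ(0,δ)} = ∞`. -/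

lemma lpNormE_mono_ae {p : ℝ≥0∞} {g h : ℝ → ℝ≥0∞} {μ : Measure ℝ}
    (hgh : ∀ᵐ t ∂μ, g t ≤ h t) : lpNormE p g μ ≤ lpNormE p h μ := by
  unfold lpNormE
  split
  · exact essSup_mono_ae hgh
  · exact ENNReal.rpow_le_rpow
      (lintegral_mono_ae (hgh.mono fun t ht => ENNReal.rpow_le_rpow ht ENNReal.toReal_nonneg))
      (by positivity)

lemma lpNormE_mono_measure {p : ℝ≥0∞} {g : ℝ → ℝ≥0∞} {μ ν : Measure ℝ} (hμν : μ ≤ ν) :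
    lpNormE p g μ ≤ lpNormE p g ν := by
  unfold lpNormE
  split
  · exact essSup_mono_measure (Measure.absolutelyContinuous_of_le hμν)
  · exact ENNReal.rpow_le_rpow (lintegral_mono' hμν le_rfl) (by positivity)

lemma lpNormE_const_mul {p : ℝ≥0∞} (hp : 0 < p) {c : ℝ≥0∞} (hc : c ≠ ∞)
    (g : ℝ → ℝ≥0∞) (μ : Measure ℝ) :
    lpNormE p (fun t => c * g t) μ = c * lpNormE p g μ := by
  unfold lpNormE
  split
  · exact ENNReal.essSup_const_mul
  · rename_i hp_top
    have hp_pos : 0 < p.toReal := ENNReal.toReal_pos hp.ne' hp_top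
    simp_rw [ENNReal.mul_rpow_of_nonneg _ _ hp_pos.le]
    rw [lintegral_const_mul' _ _ (ENNReal.rpow_ne_top_of_nonneg hp_pos.le hc),
      ENNReal.mul_rpow_of_nonneg _ _ (by positivity), ← ENNReal.rpow_mul,
      mul_one_div_cancel hp_pos.ne', ENNReal.rpow_one]

lemma lpNormE_indicator_const {q : ℝ≥0∞} (hq : 0 < q) {μ : Measure ℝ} {S : Set ℝ}
    (hS : MeasurableSet S) (hμS : μ S ≠ 0) (M : ℝ≥0∞) :
    lpNormE q (S.indicator fun _ => M) μ = M * μ S ^ (q⁻¹).toReal := by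
  unfold lpNormE
  split
  · rename_i hq_top
    subst hq_top
    rw [essSup_indicator_eq_essSup_restrict hS,
      essSup_const _ (by rwa [Ne, Measure.restrict_eq_zero])]
    simp
  · rename_i hq_top
    have hq_pos : 0 < q.toReal := ENNReal.toReal_pos hq.ne' hq_top
    have hpow : (fun t => (S.indicator (fun _ => M) t) ^ q.toReal)
        = S.indicator fun _ => M ^ q.toReal := by
      funext t
      by_cases ht : t ∈ S
      · simp [indicator_of_mem ht]
      · simp [indicator_of_notMem ht, ENNReal.zero_rpow_of_pos hq_pos]
    rw [hpow, lintegral_indicator_const hS,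
      ENNReal.mul_rpow_of_nonneg _ _ (by positivity), ← ENNReal.rpow_mul,
      mul_one_div_cancel hq_pos.ne', ENNReal.rpow_one, ENNReal.toReal_inv, one_div]

lemma sumInv_nonneg {n : ℕ} (p : Fin n → ℝ≥0∞) : 0 ≤ sumInv p :=
  Finset.sum_nonneg fun _ _ => ENNReal.toReal_nonneg

lemma cube0_eq_closedBall {n : ℕ} {r : ℝ} (hr : 0 ≤ r) :
    cube0 n r = Metric.closedBall 0 r := by
  ext x
  simp [cube0, cubeAt, pi_norm_le_iff_of_nonneg hr]

lemma snoc_mem_cube0 {n : ℕ} {s : ℝ} {x : Fin n → ℝ} {t : ℝ} :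
    (Fin.snoc x t : Fin (n + 1) → ℝ) ∈ cube0 (n + 1) s ↔ x ∈ cube0 n s ∧ t ∈ Icc (-s) s := by
  simp [cube0, cubeAt, Fin.forall_fin_succ', abs_le]

lemma indicator_cube0_snoc {n : ℕ} {s t : ℝ} (ht : t ∈ Icc (-s) s) (g : (Fin (n + 1) → ℝ) → ℝ≥0∞) :
    (fun x => (cube0 (n + 1) s).indicator g (Fin.snoc x t))
      = (cube0 n s).indicator fun x => g (Fin.snoc x t) := by
  funext x
  by_cases hx : x ∈ cube0 n s
  · rw [indicator_of_mem (snoc_mem_cube0.2 ⟨hx, ht⟩), indicator_of_mem hx]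
  · rw [indicator_of_notMem (fun h => hx (snoc_mem_cube0.1 h).1), indicator_of_notMem hx]

lemma mul_two_mul_rpow_sumInv_le_mixedNormOn {n : ℕ} {p : Fin n → ℝ≥0∞} (hp : ∀ i, 0 < p i)
    {g : (Fin n → ℝ) → ℝ≥0∞} {c : ℝ≥0∞} {r : ℝ} (hr : 0 < r)
    (hg : ∀ x ∈ cube0 n r, c ≤ g x) :
    c * ENNReal.ofReal (2 * r) ^ sumInv p ≤ mixedNormOn n p g (cube0 n r) := by
  induction n with
  | zero =>
    have h0 : (finZeroElim : Fin 0 → ℝ) ∈ cube0 0 r := fun i => i.elim0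
    simp only [sumInv, Finset.univ_eq_empty, Finset.sum_empty, ENNReal.rpow_zero, mul_one,
      mixedNormOn, mixedNorm]
    rw [indicator_of_mem h0]
    exact hg _ h0
  | succ n ih =>
    set q : Fin n → ℝ≥0∞ := fun i => p i.castSucc
    have hside : ENNReal.ofReal (2 * r) ≠ 0 := (ENNReal.ofReal_pos.2 (by linarith)).ne'
    have hslice : ∀ t, (Icc (-r) r).indicator (fun _ => c * ENNReal.ofReal (2 * r) ^ sumInv q) t
        ≤ mixedNorm n q (fun x => (cube0 (n + 1) r).indicator g (Fin.snoc x t)) := by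
      intro t
      by_cases ht : t ∈ Icc (-r) r
      · rw [indicator_of_mem ht, indicator_cube0_snoc ht]
        exact ih (fun i => hp _) fun x hx => hg _ (snoc_mem_cube0.2 ⟨hx, ht⟩)
      · simp [indicator_of_notMem ht]
    calc c * ENNReal.ofReal (2 * r) ^ sumInv p
        = c * ENNReal.ofReal (2 * r) ^ sumInv q *
            volume (Icc (-r) r) ^ ((p (Fin.last n))⁻¹).toReal := by
          rw [Real.volume_Icc, show r - -r = 2 * r by ring, sumInv, Fin.sum_univ_castSucc,
            ENNReal.rpow_add _ _ hside ENNReal.ofReal_ne_top, mul_assoc, sumInv]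
      _ = lpNormE (p (Fin.last n))
            ((Icc (-r) r).indicator fun _ => c * ENNReal.ofReal (2 * r) ^ sumInv q) volume := by
          rw [lpNormE_indicator_const (hp _) measurableSet_Icc]
          rwa [Real.volume_Icc, show r - -r = 2 * r by ring]
      _ ≤ mixedNormOn (n + 1) p g (cube0 (n + 1) r) :=
          lpNormE_mono_ae (Eventually.of_forall hslice)

lemma exists_cube0_half_norm_lt {n : ℕ} {E : Type*} [NormedAddCommGroup E]
    {f : (Fin n → ℝ) → E} (hf : ContinuousAt f 0) (hf0 : f 0 ≠ 0) :
    ∃ δ > 0, ∀ x ∈ cube0 n δ, ‖f 0‖ / 2 < ‖f x‖ := by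
  have hnear : ∀ᶠ x in nhds 0, ‖f 0‖ / 2 < ‖f x‖ :=
    hf.norm.eventually_const_lt (half_lt_self (norm_pos_iff.2 hf0))
  obtain ⟨δ, hδ, hball⟩ := Metric.nhds_basis_closedBall.eventually_iff.1 hnear
  exact ⟨δ, hδ, fun x hx => hball (cube0_eq_closedBall hδ.le ▸ hx)⟩

lemma mul_lpNormE_le_LMnormE {n : ℕ} {p : Fin n → ℝ≥0∞} {θ : ℝ≥0∞} {w : ℝ → ℝ}
    (hp : ∀ i, 0 < p i) (hθ : 0 < θ) {g : (Fin n → ℝ) → ℝ≥0∞} {c : ℝ≥0∞} (hc : c ≠ ∞)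
    {δ : ℝ} (hg : ∀ x ∈ cube0 n δ, c ≤ g x) :
    c * lpNormE θ (fun r => ENNReal.ofReal (w r * r ^ sumInv p)) (volume.restrict (Ioo 0 δ))
      ≤ LMnormE n p θ w g := by
  have hradius : ∀ r ∈ Ioo 0 δ, c * ENNReal.ofReal (w r * r ^ sumInv p)
      ≤ ENNReal.ofReal (w r) * mixedNormOn n p g (cube0 n r) := by
    intro r ⟨hr, hrδ⟩
    have hcube : c * ENNReal.ofReal (r ^ sumInv p) ≤ mixedNormOn n p g (cube0 n r) := calc
      c * ENNReal.ofReal (r ^ sumInv p) = c * ENNReal.ofReal r ^ sumInv p := by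
          rw [ENNReal.ofReal_rpow_of_pos hr]
      _ ≤ c * ENNReal.ofReal (2 * r) ^ sumInv p := by
          have hsum := sumInv_nonneg p
          gcongr
          linarith
      _ ≤ mixedNormOn n p g (cube0 n r) :=
          mul_two_mul_rpow_sumInv_le_mixedNormOn hp hr
            fun x hx => hg x fun i => (hx i).trans hrδ.le
    rw [ENNReal.ofReal_mul' (by positivity), mul_left_comm]
    gcongr
  calc c * lpNormE θ (fun r => ENNReal.ofReal (w r * r ^ sumInv p)) (volume.restrict (Ioo 0 δ))
      = lpNormE θ (fun r => c * ENNReal.ofReal (w r * r ^ sumInv p))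
          (volume.restrict (Ioo 0 δ)) := (lpNormE_const_mul hθ hc _ _).symm
    _ ≤ lpNormE θ (fun r => ENNReal.ofReal (w r) * mixedNormOn n p g (cube0 n r))
          (volume.restrict (Ioo 0 δ)) :=
        lpNormE_mono_ae ((ae_restrict_mem measurableSet_Ioo).mono hradius)
    _ ≤ LMnormE n p θ w g := lpNormE_mono_measure (Measure.restrict_mono Ioo_subset_Ioi_self le_rfl)

end LMM

open LMM

theorem statement1_general (n : ℕ) (p : Fin n → ℝ≥0∞) (θ : ℝ≥0∞) (w : ℝ → ℝ)
    (hp : ∀ i, 0 < p i) (hθ : 0 < θ)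
    (hinf : ∀ t : ℝ, 0 < t →
      lpNormE θ (fun r => ENNReal.ofReal (w r * r ^ sumInv p))
        (volume.restrict (Ioo 0 t)) = ∞) :
    ∀ f : (Fin n → ℝ) → ℝ, LocallyIntegrable f → LMnorm n p θ w f < ∞ →
      ContinuousAt f 0 → f 0 = 0 := by
  intro f _ hLM hcont
  by_contra hf0
  obtain ⟨δ, hδ, hnear⟩ := exists_cube0_half_norm_lt hcont hf0
  have hc : ENNReal.ofReal (‖f 0‖ / 2) ≠ 0 :=
    (ENNReal.ofReal_pos.2 (half_pos (norm_pos_iff.2 hf0))).ne'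
  have hbound : ENNReal.ofReal (‖f 0‖ / 2) *
      lpNormE θ (fun r => ENNReal.ofReal (w r * r ^ sumInv p)) (volume.restrict (Ioo 0 δ))
        ≤ LMnorm n p θ w f :=
    mul_lpNormE_le_LMnormE hp hθ ENNReal.ofReal_ne_top fun x hx => by
      rw [← enorm_eq_nnnorm, ← ofReal_norm]
      exact ENNReal.ofReal_le_ofReal (hnear x hx).le
  rw [hinf δ hδ, ENNReal.mul_top hc, top_le_iff] at hbound
  exact hLM.ne hbound

/-- if `‖w(r) r^{Σ 1/pᵢ}‖_{L^θ(0,t)} = ∞` for all `t > 0`, then every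
`f ∈ LM_{pθ,w}` continuous at the origin vanishes at the origin. -/
theorem statement1 (n : ℕ) (p : Fin n → ℝ≥0∞) (θ : ℝ≥0∞) (w : ℝ → ℝ)
    (hp : ∀ i, 0 < p i) (hθ : 0 < θ)
    (hwm : Measurable w) (hw0 : ∀ r, 0 ≤ w r)
    (hinf : ∀ t : ℝ, 0 < t →
      lpNormE θ (fun r => ENNReal.ofReal (w r * r ^ sumInv p))
        (volume.restrict (Ioo 0 t)) = ∞) :
    ∀ f : (Fin n → ℝ) → ℝ, LocallyIntegrable f → LMnorm n p θ w f < ∞ →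
      ContinuousAt f 0 → f 0 = 0 :=
  statement1_general n p θ w hp hθ hinf
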